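/- Let X₁, X₂, X₃ be independent with law U_T. For every r ∈ [2,∞), the probability that both X₂ and X₃ lie in N^r(X₁) equals P(X₂ ∈ N^r(X₁) and X₃ ∈ N^r(X₁)) = 1 − 2·r⁻². -/

import Mathlib

open MeasureTheory Real Set

noncomputable section

/-- The z-component of the cross product of two planar vectors. -/
def cross (u v : ℝ × ℝ) : ℝ := u.1 * v.2 - u.2 * v.1

/-- Barycentric coordinates of `x` with respect to the triangle with
vertices `a`, `b`, `c`. -/
def bary (a b c x : ℝ × ℝ) : Fin 3 → ℝ := fun i =>
  if i = 1 then cross (x - a) (c - a) / cross (b - a) (c - a)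
  else if i = 2 then cross (b - a) (x - a) / cross (b - a) (c - a)
  else 1 - cross (x - a) (c - a) / cross (b - a) (c - a)
    - cross (b - a) (x - a) / cross (b - a) (c - a)

/-- The closed triangle with vertices `a`, `b`, `c` (the set of points with
nonnegative barycentric coordinates). -/
def tri (a b c : ℝ × ℝ) : Set (ℝ × ℝ) := {x | ∀ i : Fin 3, 0 ≤ bary a b c x i}

/-- The least index maximizing the barycentric coordinates of `x`. -/
def jmax (a b c x : ℝ × ℝ) : Fin 3 :=
  if bary a b c x 1 ≤ bary a b c x 0 ∧ bary a b c x 2 ≤ bary a b c x 0 then 0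
  else if bary a b c x 2 ≤ bary a b c x 1 then 1 else 2

/-- The `r`-factor proximity region of `x` in the triangle with vertices `a`, `b`, `c`:
`N^r(x) = {z ∈ T : 1 − β_{j(x)}(z) ≤ r (1 − β_{j(x)}(x))}`. -/
def prox (a b c : ℝ × ℝ) (r : ℝ) (x : ℝ × ℝ) : Set (ℝ × ℝ) :=
  {z | z ∈ tri a b c ∧
    1 - bary a b c z (jmax a b c x) ≤ r * (1 - bary a b c x (jmax a b c x))}

/-- The uniform probability measure on `s ⊆ ℝ²` (normalized Lebesgue measure). -/
def unif (s : Set (ℝ × ℝ)) : Measure (ℝ × ℝ) := (volume s)⁻¹ • volume.restrict s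

def y1 : ℝ × ℝ := (0, 0)
def y2 : ℝ × ℝ := (1, 0)
def y3 : ℝ × ℝ := (1 / 2, Real.sqrt 3 / 2)

/-- The standard equilateral triangle. -/
def T : Set (ℝ × ℝ) := tri y1 y2 y3

/-- The `r`-factor proximity region in the standard triangle. -/
def N (r : ℝ) (x : ℝ × ℝ) : Set (ℝ × ℝ) := prox y1 y2 y3 r x

/-- The null arc probability `μ(r) = P(X₂ ∈ N^r(X₁))` for independent uniform
points in the standard triangle. -/
def mu (r : ℝ) : ℝ := (((unif T).prod (unif T)) {p | p.2 ∈ N r p.1}).toReal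

/-!
For `x ∈ T` with `s = β_{j(x)}(x)`, the region `N^r(x) = T ∩ {β_{j(x)} ≥ 1 - r(1 - s)}` is a
homothetic copy of `T` with ratio `ρ = min (r(1 - s)) 1`, so given `X₁ = x` both `X₂` and `X₃`
land in it with probability `ρ⁴`, and the answer is `E[ρ(X₁)⁴]`. Under `U_T` every barycentric
coordinate has density `2(1 - u)` on `[0, 1]`: an affine, volume-preserving symmetry of the unit
triangle turns it into the first coordinate. For `r ≥ 2` only the largest coordinate can exceed
`1 - 1/r ≥ 1/2`, so `1 - ρ⁴ = ∑ⱼ (1 - min (r(1 - βⱼ)) 1 ⁴)`, and each summand has mean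
`∫₀^{1/r} (1 - r⁴t⁴) 2t dt = 2/(3r²)`.
-/

open scoped ENNReal

lemma measure_pi_fin_three_mem_and_mem {α : Type*} [MeasurableSpace α] (μ : Measure α)
    [SigmaFinite μ] (s : α → Set α) (hs : MeasurableSet {q : α × α | q.2 ∈ s q.1}) :
    Measure.pi (fun _ : Fin 3 => μ) {x | x 1 ∈ s (x 0) ∧ x 2 ∈ s (x 0)}
      = ∫⁻ a, μ (s a) ^ 2 ∂μ := by
  set B : Set (α × (Fin 2 → α)) := {p | p.2 0 ∈ s p.1 ∧ p.2 1 ∈ s p.1}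
  have hB : MeasurableSet B :=
    (hs.preimage (measurable_fst.prodMk ((measurable_pi_apply 0).comp measurable_snd))).inter
      (hs.preimage (measurable_fst.prodMk ((measurable_pi_apply 1).comp measurable_snd)))
  have hpre : {x : Fin 3 → α | x 1 ∈ s (x 0) ∧ x 2 ∈ s (x 0)}
      = MeasurableEquiv.piFinSuccAbove (fun _ : Fin 3 => α) 0 ⁻¹' B := rfl
  rw [hpre, (measurePreserving_piFinSuccAbove (fun _ : Fin 3 => μ) 0).measure_preimage
      hB.nullMeasurableSet, Measure.prod_apply hB]
  congr 1 with a
  have hslice : Prod.mk a ⁻¹' B = Set.pi univ fun _ : Fin 2 => s a := by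
    ext y
    simp [B, Fin.forall_fin_two]
  rw [hslice, Measure.pi_pi, Fin.prod_univ_two, sq]

lemma setLIntegral_Icc_ofReal {f : ℝ → ℝ} (hf : Continuous f) {a b : ℝ} (hab : a ≤ b)
    (hf₀ : ∀ u ∈ Icc a b, 0 ≤ f u) :
    ∫⁻ u in Icc a b, ENNReal.ofReal (f u) = ENNReal.ofReal (∫ u in a..b, f u) := by
  rw [intervalIntegral.integral_of_le hab, ← integral_Icc_eq_integral_Ioc,
    ofReal_integral_eq_lintegral_ofReal hf.integrableOn_Icc
      ((ae_restrict_iff' measurableSet_Icc).2 (ae_of_all _ hf₀))]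

lemma integral_one_sub_pow (a : ℝ) (n : ℕ) :
    ∫ u in a..1, (1 - u) ^ n = (1 - a) ^ (n + 1) / (n + 1) := by
  rw [intervalIntegral.integral_comp_sub_left (fun t => t ^ n), integral_pow]
  norm_num

lemma integral_one_sub (a : ℝ) : ∫ u in a..1, (1 - u) = (1 - a) ^ 2 / 2 := by
  simpa [one_add_one_eq_two] using integral_one_sub_pow a 1

lemma map_toLin_finTwoProd_volume (A : Matrix (Fin 2) (Fin 2) ℝ) (hA : A.det ≠ 0) :
    Measure.map (Matrix.toLin (Module.Basis.finTwoProd ℝ) (Module.Basis.finTwoProd ℝ) A) volume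
      = ENNReal.ofReal |A.det⁻¹| • volume := by
  rw [Measure.map_linearMap_addHaar_eq_smul_addHaar _ (by rwa [LinearMap.det_toLin]),
    LinearMap.det_toLin]

section Triangle

variable (a b c : ℝ × ℝ)

lemma continuous_bary (j : Fin 3) : Continuous fun x => bary a b c x j := by
  fin_cases j <;>
    simp only [bary, cross, Fin.zero_eta, Fin.mk_one, Fin.reduceFinMk, Fin.isValue, zero_ne_one,
      Fin.reduceEq, ↓reduceIte] <;>
    fun_prop

lemma measurable_bary_uncurry : Measurable fun p : (ℝ × ℝ) × Fin 3 => bary a b c p.1 p.2 :=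
  measurable_from_prod_countable_left fun j => (continuous_bary a b c j).measurable

lemma isClosed_tri : IsClosed (tri a b c) := by
  simp only [tri, ofPred_forall]
  exact isClosed_iInter fun j => isClosed_le continuous_const (continuous_bary a b c j)

lemma measurable_jmax : Measurable (jmax a b c) := by
  unfold jmax
  refine Measurable.ite ?_ measurable_const (Measurable.ite ?_ measurable_const measurable_const)
  · exact ((isClosed_le (continuous_bary a b c 1) (continuous_bary a b c 0)).inter
      (isClosed_le (continuous_bary a b c 2) (continuous_bary a b c 0))).measurableSet
  · exact (isClosed_le (continuous_bary a b c 2) (continuous_bary a b c 1)).measurableSet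

lemma measurableSet_setOf_mem_prox (r : ℝ) :
    MeasurableSet {q : (ℝ × ℝ) × (ℝ × ℝ) | q.2 ∈ prox a b c r q.1} := by
  have hj : Measurable fun q : (ℝ × ℝ) × (ℝ × ℝ) => jmax a b c q.1 :=
    (measurable_jmax a b c).comp measurable_fst
  have h1 := (measurable_bary_uncurry a b c).comp (measurable_fst.prodMk hj)
  have h2 := (measurable_bary_uncurry a b c).comp (measurable_snd.prodMk hj)
  exact ((isClosed_tri a b c).measurableSet.preimage measurable_snd).inter
    (measurableSet_le (measurable_const.sub h2) (measurable_const.mul (measurable_const.sub h1)))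

lemma bary_sum (x : ℝ × ℝ) : bary a b c x 0 + bary a b c x 1 + bary a b c x 2 = 1 := by
  simp only [bary, Fin.isValue, zero_ne_one, ↓reduceIte, Fin.reduceEq]
  ring

variable {a b c}

lemma bary_le_bary_jmax (x : ℝ × ℝ) (i : Fin 3) : bary a b c x i ≤ bary a b c x (jmax a b c x) := by
  unfold jmax
  split_ifs with h₀ h₁
  · fin_cases i <;> simp [h₀.1, h₀.2]
  · have : bary a b c x 0 ≤ bary a b c x 1 := by
      by_contra! h; exact h₀ ⟨h.le, h₁.trans h.le⟩
    fin_cases i <;> simp [this, h₁]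
  · have : bary a b c x 0 ≤ bary a b c x 2 := by
      by_contra! h; exact h₀ ⟨(le_of_not_ge h₁).trans h.le, h.le⟩
    fin_cases i <;> simp [this, (le_of_not_ge h₁)]

lemma bary_add_bary_le_one {x : ℝ × ℝ} (hx : x ∈ tri a b c) {i j : Fin 3} (hij : i ≠ j) :
    bary a b c x i + bary a b c x j ≤ 1 := by
  rw [← Finset.sum_pair hij, ← bary_sum a b c x, ← Fin.sum_univ_three]
  exact Finset.sum_le_sum_of_subset_of_nonneg (Finset.subset_univ _) fun k _ _ => hx k

lemma bary_le_one {x : ℝ × ℝ} (hx : x ∈ tri a b c) (j : Fin 3) : bary a b c x j ≤ 1 := by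
  linarith [hx (j + 1), bary_add_bary_le_one hx (show j + 1 ≠ j by simp)]

lemma bary_le_half_of_ne_jmax {x : ℝ × ℝ} (hx : x ∈ tri a b c) {i : Fin 3}
    (hi : i ≠ jmax a b c x) : bary a b c x i ≤ 1 / 2 := by
  linarith [bary_le_bary_jmax x i (a := a) (b := b) (c := c), bary_add_bary_le_one hx hi]

lemma prox_eq_inter (r : ℝ) (x : ℝ × ℝ) :
    prox a b c r x = tri a b c ∩
      {z | 1 - r * (1 - bary a b c x (jmax a b c x)) ≤ bary a b c z (jmax a b c x)} := by
  ext z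
  simp only [prox, mem_ofPred_eq, mem_inter_iff, sub_le_comm]

end Triangle

local notation "√3" => Real.sqrt 3

def unitTriangle : Set (ℝ × ℝ) := {p | 0 ≤ p.1 ∧ 0 ≤ p.2 ∧ p.1 + p.2 ≤ 1}

lemma measurableSet_unitTriangle : MeasurableSet unitTriangle :=
  (measurableSet_le measurable_const measurable_fst).inter
    ((measurableSet_le measurable_const measurable_snd).inter
      (measurableSet_le (measurable_fst.add measurable_snd) measurable_const))

-- Affine symmetries of `unitTriangle` that move the `j`-th barycentric coordinate to the first.
def cornerChart (j : Fin 3) : ℝ × ℝ → ℝ × ℝ := ![fun p => (1 - p.1 - p.2, p.2), id, Prod.swap] j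

lemma cornerChart_preimage_unitTriangle (j : Fin 3) :
    cornerChart j ⁻¹' unitTriangle = unitTriangle := by
  ext p
  fin_cases j <;>
    simp only [cornerChart, unitTriangle, mem_preimage, mem_ofPred_eq, Fin.zero_eta, Fin.mk_one,
      Fin.reduceFinMk, Matrix.cons_val_zero, Matrix.cons_val_one, Matrix.cons_val, id_eq,
      Prod.fst_swap, Prod.snd_swap] <;>
    grind

lemma measurePreserving_cornerChart (j : Fin 3) :
    MeasurePreserving (cornerChart j) volume volume := by
  fin_cases j
  · let L := Matrix.toLin (Module.Basis.finTwoProd ℝ) (Module.Basis.finTwoProd ℝ) !![-1, -1; 0, 1]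
    have hL : MeasurePreserving L volume volume :=
      ⟨L.continuous_of_finiteDimensional.measurable, by
        rw [map_toLin_finTwoProd_volume _ (by simp [Matrix.det_fin_two])]; simp⟩
    have : cornerChart 0 = (fun p => (1, 0) + p) ∘ L := by
      funext p
      simp only [cornerChart, L, Function.comp_apply, Matrix.toLin_finTwoProd_apply,
        Matrix.cons_val_zero, Prod.mk_add_mk]
      ext <;> ring
    simpa [this] using (measurePreserving_add_left volume ((1 : ℝ), (0 : ℝ))).comp hL
  · exact MeasurePreserving.id volume
  · simpa [cornerChart, Measure.volume_eq_prod] using Measure.measurePreserving_swap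

lemma lintegral_unitTriangle_fst (f : ℝ → ℝ≥0∞) (hf : Measurable f) :
    ∫⁻ p in unitTriangle, f p.1 = ∫⁻ u in Icc 0 1, f u * ENNReal.ofReal (1 - u) := by
  rw [← lintegral_indicator measurableSet_unitTriangle, Measure.volume_eq_prod,
    lintegral_prod (unitTriangle.indicator fun p => f p.1)
      ((hf.comp measurable_fst).indicator measurableSet_unitTriangle).aemeasurable,
    ← lintegral_indicator measurableSet_Icc]
  congr 1 with u
  by_cases hu : 0 ≤ u
  · have slice : (fun v => unitTriangle.indicator (fun p => f p.1) (u, v))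
        = (Icc 0 (1 - u)).indicator fun _ => f u := by
      ext v
      simp only [indicator, unitTriangle, mem_ofPred_eq, mem_Icc, hu, true_and, le_sub_iff_add_le']
    rw [slice, lintegral_indicator_const measurableSet_Icc, Real.volume_Icc, sub_zero]
    by_cases hu1 : u ≤ 1
    · rw [indicator_of_mem (mem_Icc.2 ⟨hu, hu1⟩)]
    · rw [indicator_of_notMem (fun h => hu1 h.2), ENNReal.ofReal_of_nonpos (by linarith), mul_zero]
  · have slice : (fun v => unitTriangle.indicator (fun p => f p.1) (u, v)) = 0 := by
      ext v; exact indicator_of_notMem (fun h => hu h.1) _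
    rw [slice, Pi.zero_def, lintegral_zero, indicator_of_notMem (fun h => hu h.1)]

-- `x ↦ (β₁ x, β₂ x)`, which maps `T` onto `unitTriangle`.
def toUnitTriangle : ℝ × ℝ →ₗ[ℝ] ℝ × ℝ :=
  Matrix.toLin (Module.Basis.finTwoProd ℝ) (Module.Basis.finTwoProd ℝ) !![1, -(√3)⁻¹; 0, 2 / √3]

lemma toUnitTriangle_apply (x : ℝ × ℝ) : toUnitTriangle x = (x.1 - x.2 / √3, 2 * x.2 / √3) := by
  simp only [toUnitTriangle, Matrix.toLin_finTwoProd_apply, Prod.mk.injEq]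
  constructor <;> ring

lemma map_toUnitTriangle_volume :
    Measure.map toUnitTriangle volume = ENNReal.ofReal (√3 / 2) • volume := by
  have h3 : (0 : ℝ) < √3 := by positivity
  rw [toUnitTriangle, map_toLin_finTwoProd_volume _ (by simp [Matrix.det_fin_two_of]),
    Matrix.det_fin_two_of]
  congr 2
  have hd : (1 * (2 / √3) - -(√3)⁻¹ * 0 : ℝ)⁻¹ = √3 / 2 := by field_simp; ring
  rw [hd, abs_of_pos (by positivity)]

lemma bary_eq_cornerChart_fst (x : ℝ × ℝ) (j : Fin 3) :
    bary y1 y2 y3 x j = (cornerChart j (toUnitTriangle x)).1 := by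
  have h3 : √3 ≠ 0 := by positivity
  fin_cases j <;> simp [bary, cross, cornerChart, toUnitTriangle_apply, y1, y2, y3] <;>
    field_simp

lemma T_eq_preimage : T = toUnitTriangle ⁻¹' unitTriangle := by
  ext x
  simp only [T, tri, Fin.forall_fin_succ, IsEmpty.forall_iff, bary_eq_cornerChart_fst, cornerChart,
    unitTriangle, mem_preimage, mem_ofPred_eq, Matrix.cons_val_zero, Matrix.cons_val_succ]
  grind

lemma setLIntegral_T_bary (j : Fin 3) (f : ℝ → ℝ≥0∞) (hf : Measurable f) :
    ∫⁻ x in T, f (bary y1 y2 y3 x j)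
      = ENNReal.ofReal (√3 / 2) * ∫⁻ u in Icc 0 1, f u * ENNReal.ofReal (1 - u) := by
  have hκ := measurePreserving_cornerChart j
  simp_rw [bary_eq_cornerChart_fst]
  rw [T_eq_preimage, ← setLIntegral_map (f := fun p => f (cornerChart j p).1)
      measurableSet_unitTriangle (hf.comp (measurable_fst.comp hκ.measurable))
      toUnitTriangle.continuous_of_finiteDimensional.measurable,
    map_toUnitTriangle_volume, Measure.restrict_smul, lintegral_smul_measure,
    ← cornerChart_preimage_unitTriangle j,
    hκ.setLIntegral_comp_preimage (f := fun p => f p.1) measurableSet_unitTriangle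
      (hf.comp measurable_fst),
    lintegral_unitTriangle_fst f hf, smul_eq_mul]

lemma volume_T : volume T = ENNReal.ofReal (√3 / 4) := by
  have h := setLIntegral_T_bary 0 (fun _ => 1) measurable_const
  simp only [setLIntegral_const, one_mul] at h
  rw [h, setLIntegral_Icc_ofReal (by fun_prop) zero_le_one (fun u hu => by linarith [hu.2]),
    integral_one_sub, ← ENNReal.ofReal_mul (by positivity)]
  ring_nf

instance : IsProbabilityMeasure (unif T) := by
  constructor
  rw [unif, Measure.smul_apply, Measure.restrict_apply_univ, volume_T, smul_eq_mul]
  exact ENNReal.inv_mul_cancel (by simp) ENNReal.ofReal_ne_top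

lemma ae_unif_T_mem : ∀ᵐ x ∂unif T, x ∈ T :=
  Measure.ae_smul_measure (ae_restrict_mem (isClosed_tri y1 y2 y3).measurableSet) _

lemma unif_T_inter_T (s : Set (ℝ × ℝ)) : unif T (T ∩ s) = unif T s := by
  simp only [unif, Measure.smul_apply,
    Measure.restrict_apply' (isClosed_tri y1 y2 y3).measurableSet, T]
  rw [inter_comm (tri y1 y2 y3), inter_assoc, inter_self]

lemma lintegral_unif_T_bary (j : Fin 3) (f : ℝ → ℝ≥0∞) (hf : Measurable f) :
    ∫⁻ x, f (bary y1 y2 y3 x j) ∂unif T = ∫⁻ u in Icc 0 1, f u * ENNReal.ofReal (2 * (1 - u)) := by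
  have h2 : (ENNReal.ofReal (√3 / 4))⁻¹ * ENNReal.ofReal (√3 / 2) = 2 := by
    rw [← ENNReal.ofReal_inv_of_pos (by positivity), ← ENNReal.ofReal_mul (by positivity)]
    have : (√3 / 4)⁻¹ * (√3 / 2) = 2 := by field_simp; norm_num
    rw [this, ENNReal.ofReal_ofNat]
  rw [unif, lintegral_smul_measure, setLIntegral_T_bary j f hf, volume_T, smul_eq_mul, ← mul_assoc,
    h2, ← lintegral_const_mul' _ _ ENNReal.ofNat_ne_top]
  congr 1 with u
  rw [ENNReal.ofReal_mul zero_le_two, ENNReal.ofReal_ofNat]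
  ring

lemma unif_T_setOf_le_bary (j : Fin 3) {c : ℝ} (hc : c ≤ 1) :
    unif T {z | c ≤ bary y1 y2 y3 z j} = ENNReal.ofReal (min (1 - c) 1 ^ 2) := by
  have hm : MeasurableSet {z | c ≤ bary y1 y2 y3 z j} :=
    measurableSet_le measurable_const (continuous_bary y1 y2 y3 j).measurable
  have hIcc : Ici c ∩ Icc 0 1 = Icc (max c 0) 1 := by
    ext u; simp only [mem_inter_iff, mem_Ici, mem_Icc, max_le_iff]; tauto
  rw [← lintegral_indicator_one hm]
  change ∫⁻ z, (Ici c).indicator 1 (bary y1 y2 y3 z j) ∂unif T = _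
  rw [lintegral_unif_T_bary j _ (measurable_one.indicator measurableSet_Ici)]
  have hind : ∀ u, (Ici c).indicator 1 u * ENNReal.ofReal (2 * (1 - u))
      = (Ici c).indicator (fun u => ENNReal.ofReal (2 * (1 - u))) u := fun u => by
    by_cases hu : u ∈ Ici c <;> simp [hu]
  simp_rw [hind]
  rw [lintegral_indicator measurableSet_Ici, Measure.restrict_restrict measurableSet_Ici, hIcc,
    setLIntegral_Icc_ofReal (by fun_prop) (max_le hc zero_le_one)
      (fun u hu => by nlinarith [hu.2]),
    intervalIntegral.integral_const_mul, integral_one_sub, ← min_sub_sub_left, sub_zero]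
  ring_nf

def proxRatio (r s : ℝ) : ℝ := min (r * (1 - s)) 1

lemma proxRatio_nonneg {r s : ℝ} (hr : 0 ≤ r) (hs : s ≤ 1) : 0 ≤ proxRatio r s :=
  le_min (mul_nonneg hr (sub_nonneg.2 hs)) zero_le_one

lemma proxRatio_pow_le_one {r s : ℝ} (hr : 0 ≤ r) (hs : s ≤ 1) (n : ℕ) : proxRatio r s ^ n ≤ 1 :=
  pow_le_one₀ (proxRatio_nonneg hr hs) (min_le_right _ _)

lemma continuous_proxRatio (r : ℝ) : Continuous (proxRatio r) := by
  unfold proxRatio; fun_prop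

lemma unif_T_N {r : ℝ} (hr : 0 ≤ r) {x : ℝ × ℝ} (hx : x ∈ T) :
    unif T (N r x) = ENNReal.ofReal (proxRatio r (bary y1 y2 y3 x (jmax y1 y2 y3 x)) ^ 2) := by
  have hb := bary_le_one hx (jmax y1 y2 y3 x)
  rw [N, prox_eq_inter, ← T, unif_T_inter_T,
    unif_T_setOf_le_bary _ (by nlinarith), sub_sub_cancel, proxRatio]

lemma integral_one_sub_proxRatio_pow_four {r : ℝ} (hr : 1 ≤ r) :
    ∫ u in (0:ℝ)..1, (1 - proxRatio r u ^ 4) * (2 * (1 - u)) = 2 / 3 * (r ^ 2)⁻¹ := by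
  have hr₀ : 0 < r := by linarith
  have hc : 0 ≤ 1 - r⁻¹ := sub_nonneg.2 (inv_le_one_of_one_le₀ hr)
  have hint : ∀ a b : ℝ, IntervalIntegrable (fun u => (1 - proxRatio r u ^ 4) * (2 * (1 - u)))
      volume a b := fun a b => by
    have := continuous_proxRatio r
    exact Continuous.intervalIntegrable (by fun_prop) a b
  have hfar : ∫ u in (0:ℝ)..1 - r⁻¹, (1 - proxRatio r u ^ 4) * (2 * (1 - u)) = 0 := by
    refine (intervalIntegral.integral_congr fun u hu => ?_).trans intervalIntegral.integral_zero
    rw [uIcc_of_le hc] at hu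
    have : 1 ≤ r * (1 - u) := by
      have := mul_le_mul_of_nonneg_left (le_sub_comm.1 hu.2) hr₀.le
      rwa [mul_inv_cancel₀ hr₀.ne'] at this
    simp [proxRatio, min_eq_right this]
  have hnear : ∫ u in 1 - r⁻¹..1, (1 - proxRatio r u ^ 4) * (2 * (1 - u))
      = ∫ u in 1 - r⁻¹..1, (2 * (1 - u) ^ 1 - 2 * r ^ 4 * (1 - u) ^ 5) := by
    refine intervalIntegral.integral_congr fun u hu => ?_
    rw [uIcc_of_le (by linarith [inv_pos.2 hr₀])] at hu
    have : r * (1 - u) ≤ 1 := by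
      have := mul_le_mul_of_nonneg_left (sub_le_comm.1 hu.1) hr₀.le
      rwa [mul_inv_cancel₀ hr₀.ne'] at this
    simp only [proxRatio, min_eq_left this]
    ring
  rw [← intervalIntegral.integral_add_adjacent_intervals (hint 0 (1 - r⁻¹)) (hint _ 1), hfar,
    hnear, intervalIntegral.integral_sub ((by fun_prop : Continuous _).intervalIntegrable _ _)
      ((by fun_prop : Continuous _).intervalIntegrable _ _),
    intervalIntegral.integral_const_mul, intervalIntegral.integral_const_mul,
    integral_one_sub_pow, integral_one_sub_pow, sub_sub_cancel]
  norm_num [inv_pow]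
  field_simp
  ring

lemma lintegral_unif_T_one_sub_proxRatio_pow_four {r : ℝ} (hr : 1 ≤ r) (j : Fin 3) :
    ∫⁻ x, ENNReal.ofReal (1 - proxRatio r (bary y1 y2 y3 x j) ^ 4) ∂unif T
      = ENNReal.ofReal (2 / 3 * (r ^ 2)⁻¹) := by
  have := continuous_proxRatio r
  rw [lintegral_unif_T_bary j (fun s => ENNReal.ofReal (1 - proxRatio r s ^ 4))
      (ENNReal.measurable_ofReal.comp (by fun_prop)), ← integral_one_sub_proxRatio_pow_four hr,
    ← setLIntegral_Icc_ofReal (by fun_prop) zero_le_one]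
  · refine setLIntegral_congr_fun measurableSet_Icc fun u hu => ?_
    exact (ENNReal.ofReal_mul (sub_nonneg.2 (proxRatio_pow_le_one (by linarith) hu.2 4))).symm
  · exact fun u hu => mul_nonneg (sub_nonneg.2 (proxRatio_pow_le_one (by linarith) hu.2 4))
      (by linarith [hu.2])

lemma proxRatio_jmax_add_sum_one_sub {r : ℝ} (hr : 2 ≤ r) {x : ℝ × ℝ} (hx : x ∈ T) :
    ENNReal.ofReal (proxRatio r (bary y1 y2 y3 x (jmax y1 y2 y3 x)) ^ 4)
      + ∑ i, ENNReal.ofReal (1 - proxRatio r (bary y1 y2 y3 x i) ^ 4) = 1 := by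
  have hfar : ∀ i ≠ jmax y1 y2 y3 x, proxRatio r (bary y1 y2 y3 x i) = 1 := fun i hi =>
    min_eq_right (by nlinarith [bary_le_half_of_ne_jmax hx hi])
  rw [Finset.sum_eq_single (jmax y1 y2 y3 x) (fun i _ hi => by simp [hfar i hi]) (by simp),
    ← ENNReal.ofReal_add (pow_nonneg (proxRatio_nonneg (by linarith) (bary_le_one hx _)) 4)
      (sub_nonneg.2 (proxRatio_pow_le_one (by linarith) (bary_le_one hx _) 4)),
    add_sub_cancel, ENNReal.ofReal_one]

lemma lintegral_unif_T_proxRatio_pow_four {r : ℝ} (hr : 2 ≤ r) :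
    ∫⁻ x, ENNReal.ofReal (proxRatio r (bary y1 y2 y3 x (jmax y1 y2 y3 x)) ^ 4) ∂unif T
      = ENNReal.ofReal (1 - 2 * (r ^ 2)⁻¹) := by
  have hmeas : ∀ i, Measurable fun x => ENNReal.ofReal (1 - proxRatio r (bary y1 y2 y3 x i) ^ 4) :=
    fun i => ENNReal.measurable_ofReal.comp (by
      have := continuous_proxRatio r; have := continuous_bary y1 y2 y3 i; fun_prop)
  have hsum := lintegral_congr_ae
    (ae_unif_T_mem.mono fun x hx => proxRatio_jmax_add_sum_one_sub hr hx)
  rw [lintegral_add_right _ (Finset.measurable_sum _ fun i _ => hmeas i),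
    lintegral_finsetSum _ fun i _ => hmeas i, lintegral_const, measure_univ, mul_one] at hsum
  simp only [lintegral_unif_T_one_sub_proxRatio_pow_four (by linarith : (1 : ℝ) ≤ r),
    Finset.sum_const, Finset.card_univ, Fintype.card_fin, nsmul_eq_mul] at hsum
  rw [ENNReal.eq_sub_of_add_eq (by finiteness) hsum, ← ENNReal.ofReal_one, Nat.cast_ofNat,
    ← ENNReal.ofReal_ofNat 3, ← ENNReal.ofReal_mul (by norm_num),
    ← ENNReal.ofReal_sub _ (by positivity)]
  ring_nf

/-- For `r ≥ 2`, `P({X₂, X₃} ⊂ N^r(X₁)) = 1 − 2 r⁻²`. -/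
theorem prob_both_in_prox (r : ℝ) (hr : r ∈ Set.Ici (2 : ℝ)) :
    ((Measure.pi fun _ : Fin 3 => unif T)
        {x | x 1 ∈ N r (x 0) ∧ x 2 ∈ N r (x 0)}).toReal =
      1 - 2 * (r ^ 2)⁻¹ := by
  have hr : 2 ≤ r := hr
  have hN : ∀ᵐ x ∂unif T, unif T (N r x) ^ 2
      = ENNReal.ofReal (proxRatio r (bary y1 y2 y3 x (jmax y1 y2 y3 x)) ^ 4) :=
    ae_unif_T_mem.mono fun x hx => by
      rw [unif_T_N (by linarith) hx, ← ENNReal.ofReal_pow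
        (pow_nonneg (proxRatio_nonneg (by linarith) (bary_le_one hx _)) 2), ← pow_mul]
  rw [measure_pi_fin_three_mem_and_mem _ (N r) (measurableSet_setOf_mem_prox y1 y2 y3 r),
    lintegral_congr_ae hN, lintegral_unif_T_proxRatio_pow_four hr,
    ENNReal.toReal_ofReal]
  rw [sub_nonneg, ← div_eq_mul_inv, div_le_one (by positivity)]
  nlinarith
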